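/- Every skeletal Rees category embeds in its universal groupoid: if C is a skeletal left Rees category that is also right cancellative, then the canonical functor ι : C → U(C) from C to its universal groupoid (the localization of C at all of its arrows, i.e. the groupoid with the universal property that every functor from C to a groupoid factors uniquely through ι) is faithful, i.e. injective on arrows between any fixed pair of identities. -/

import Mathlib

open CategoryTheory

universe v u

variable {C : Type u} [Category.{v} C]

/-- The set of all arrows of a category, as a sigma type. -/
abbrev CatArr (C : Type u) [Category.{v} C] : Type (max u v) := Σ (X : C) (Y : C), X ⟶ Y

/-- An arrow is an atom if it is not invertible and in any factorization one factor
is invertible. -/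
def IsAtomArrow {X Y : C} (a : X ⟶ Y) : Prop :=
  ¬ IsIso a ∧ ∀ ⦃Z : C⦄ (b : X ⟶ Z) (c : Z ⟶ Y), a = b ≫ c → IsIso b ∨ IsIso c

/-- The principal right ideal `aC` generated by an arrow `a`. -/
def rIdeal {X Y : C} (a : X ⟶ Y) : Set (CatArr C) :=
  { p | ∃ (Z : C) (b : Y ⟶ Z), p = ⟨X, Z, a ≫ b⟩ }

/-- The principal left ideal `Ca` generated by an arrow `a`. -/
def lIdeal {X Y : C} (a : X ⟶ Y) : Set (CatArr C) :=
  { p | ∃ (Z : C) (b : Z ⟶ X), p = ⟨Z, Y, b ≫ a⟩ }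

/-- The principal two-sided ideal `CaC` generated by an arrow `a`. -/
def twoIdeal {X Y : C} (a : X ⟶ Y) : Set (CatArr C) :=
  { p | ∃ (W Z : C) (b : W ⟶ X) (c : Y ⟶ Z), p = ⟨W, Z, b ≫ a ≫ c⟩ }

/-- A category is left cancellative if `ax = ay` implies `x = y`. -/
def LeftCancellativeCat (C : Type u) [Category.{v} C] : Prop :=
  ∀ ⦃X Y Z : C⦄ (a : X ⟶ Y) (x y : Y ⟶ Z), a ≫ x = a ≫ y → x = y

/-- A category is right cancellative if `xa = ya` implies `x = y`. -/
def RightCancellativeCat (C : Type u) [Category.{v} C] : Prop :=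
  ∀ ⦃X Y Z : C⦄ (x y : X ⟶ Y) (a : Y ⟶ Z), x ≫ a = y ≫ a → x = y

/-- A category is right rigid if principal right ideals that intersect are comparable. -/
def RightRigid (C : Type u) [Category.{v} C] : Prop :=
  ∀ ⦃X Y X' Y' : C⦄ (a : X ⟶ Y) (b : X' ⟶ Y'),
    (rIdeal a ∩ rIdeal b).Nonempty → rIdeal a ⊆ rIdeal b ∨ rIdeal b ⊆ rIdeal a

/-- A category is equidivisible if every equality `ab = cd` admits an intermediate arrow. -/
def Equidivisible (C : Type u) [Category.{v} C] : Prop :=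
  ∀ ⦃W X Y Z : C⦄ (a : W ⟶ X) (b : X ⟶ Z) (c : W ⟶ Y) (d : Y ⟶ Z),
    a ≫ b = c ≫ d →
      (∃ u : Y ⟶ X, a = c ≫ u ∧ d = u ≫ b) ∨ (∃ v : X ⟶ Y, c = a ≫ v ∧ b = v ≫ d)

/-- A length functor on a category: additive on composition, zero exactly on invertible
arrows, one exactly on atoms. -/
structure LengthFunctor (C : Type u) [Category.{v} C] where
  len : ∀ ⦃X Y : C⦄, (X ⟶ Y) → ℕ
  len_comp : ∀ ⦃X Y Z : C⦄ (f : X ⟶ Y) (g : Y ⟶ Z), len (f ≫ g) = len f + len g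
  len_eq_zero_iff : ∀ ⦃X Y : C⦄ (f : X ⟶ Y), len f = 0 ↔ IsIso f
  len_eq_one_iff : ∀ ⦃X Y : C⦄ (f : X ⟶ Y), len f = 1 ↔ IsAtomArrow f

/-- A subset of the arrows is a principal right ideal if it has the form `xC`. -/
def IsPrincipalRightIdeal (S : Set (CatArr C)) : Prop :=
  ∃ (U V : C) (x : U ⟶ V), S = rIdeal x

/-- The interval `[aC, bC]` of principal right ideals between `aC` and `bC`. -/
def rInterval {X Y Z W : C} (a : X ⟶ Y) (b : Z ⟶ W) : Set (Set (CatArr C)) :=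
  { S | IsPrincipalRightIdeal S ∧ rIdeal a ⊆ S ∧ S ⊆ rIdeal b }

/-- A left Rees category: left cancellative, right rigid, and each principal right
ideal is properly contained in only finitely many principal right ideals. -/
def IsLeftReesCategory (C : Type u) [Category.{v} C] : Prop :=
  LeftCancellativeCat C ∧ RightRigid C ∧
    ∀ ⦃X Y : C⦄ (a : X ⟶ Y),
      { S : Set (CatArr C) | IsPrincipalRightIdeal S ∧ rIdeal a ⊂ S }.Finite

/-- A category is skeletal if every invertible arrow has equal domain and codomain. -/
def SkeletalCat (C : Type u) [Category.{v} C] : Prop :=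
  ∀ ⦃X Y : C⦄ (g : X ⟶ Y), IsIso g → X = Y

/-!
Van der Waerden's trick. An arrow of `U(C)` should be represented by a reduced word
`x₁ y₁⁻¹ x₂ y₂⁻¹ ⋯ u`: non-invertible letters, left coprime at every junction `y⁻¹ x`, right
coprime at every junction `x y⁻¹`, followed by a unit `u`, all up to inserting units between the
letters. Instead of proving that this normal form is unique, let `C` act on the right of reduced
words. Multiplying `⋯ y⁻¹` by `c` cancels a greatest common left divisor of `y` and `c`: it exists
because only finitely many principal right ideals contain `yC`, and it is unique up to a unit by
right rigidity. Dually, multiplying `⋯ x` by `b⁻¹` cancels a greatest common right divisor, unique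
up to a unit by right cancellativity. Each arrow acts by a bijection, so the action factors through
`ι`; as `f` sends the empty word to the word `f`, `ι` is faithful.
-/

class ReesCategory (C : Type u) [Category.{v} C] : Prop where
  leftCancellative : LeftCancellativeCat C
  rightCancellative : RightCancellativeCat C
  rightRigid : RightRigid C
  finite_ssupset : ∀ ⦃X Y : C⦄ (a : X ⟶ Y),
    { S : Set (CatArr C) | IsPrincipalRightIdeal S ∧ rIdeal a ⊂ S }.Finite

namespace ReesCategory

/-! ### Divisibility -/

theorem mem_rIdeal_self {X Y : C} (a : X ⟶ Y) : (⟨X, Y, a⟩ : CatArr C) ∈ rIdeal a :=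
  ⟨Y, 𝟙 Y, by simp⟩

theorem rIdeal_comp_subset {X Y Z : C} (a : X ⟶ Y) (b : Y ⟶ Z) :
    rIdeal (a ≫ b) ⊆ rIdeal a := by
  rintro _ ⟨W, c, rfl⟩
  exact ⟨W, b ≫ c, by simp⟩

theorem exists_eq_comp_of_rIdeal_subset {X Y Z : C} {a : X ⟶ Y} {c : X ⟶ Z}
    (h : rIdeal a ⊆ rIdeal c) : ∃ u : Z ⟶ Y, a = c ≫ u := by
  obtain ⟨_, u, he⟩ := h (mem_rIdeal_self a)
  simp only [Sigma.mk.injEq, heq_eq_eq, true_and] at he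
  obtain ⟨rfl, he⟩ := he
  exact ⟨u, eq_of_heq he⟩

def LeftCoprime {Z A B : C} (p : Z ⟶ A) (q : Z ⟶ B) : Prop :=
  ∀ ⦃M : C⦄ (d : Z ⟶ M) (f : M ⟶ A) (g : M ⟶ B), p = d ≫ f → q = d ≫ g → IsIso d

def RightCoprime {Z A B : C} (p : A ⟶ Z) (q : B ⟶ Z) : Prop :=
  ∀ ⦃M : C⦄ (d : M ⟶ Z) (f : A ⟶ M) (g : B ⟶ M), p = f ≫ d → q = g ≫ d → IsIso d

theorem LeftCoprime.symm {Z A B : C} {p : Z ⟶ A} {q : Z ⟶ B} (h : LeftCoprime p q) :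
    LeftCoprime q p :=
  fun _ d f g hp hq => h d g f hq hp

theorem RightCoprime.symm {Z A B : C} {p : A ⟶ Z} {q : B ⟶ Z} (h : RightCoprime p q) :
    RightCoprime q p :=
  fun _ d f g hp hq => h d g f hq hp

theorem LeftCoprime.of_eq_comp {Z A B B' : C} {p : Z ⟶ A} {q : Z ⟶ B} (h : LeftCoprime p q)
    {q' : Z ⟶ B'} {c : B' ⟶ B} (hq : q = q' ≫ c) : LeftCoprime p q' :=
  fun _ d f g hp hq' => h d f (g ≫ c) hp (by rw [hq, hq', Category.assoc])

theorem RightCoprime.of_eq_comp {Z A B B' : C} {p : A ⟶ Z} {q : B ⟶ Z} (h : RightCoprime p q)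
    {q' : B' ⟶ Z} {c : B ⟶ B'} (hq : q = c ≫ q') : RightCoprime p q' :=
  fun _ d f g hp hq' => h d f (c ≫ g) hp (by rw [hq, hq', Category.assoc])

theorem LeftCoprime.comp_isIso {Z A B B' : C} {p : Z ⟶ A} {q : Z ⟶ B} (h : LeftCoprime p q)
    (g : B ⟶ B') [IsIso g] : LeftCoprime p (q ≫ g) :=
  fun _ d f k hp hq => h d f (k ≫ inv g) hp (by simp [← reassoc_of% hq])

theorem RightCoprime.isIso_comp {Z A B B' : C} {p : A ⟶ Z} {q : B ⟶ Z} (h : RightCoprime p q)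
    (g : B' ⟶ B) [IsIso g] : RightCoprime p (g ≫ q) :=
  fun _ d f k hp hq => h d f (inv g ≫ k) hp (by simp [Category.assoc, ← hq])

section

variable [ReesCategory C]

instance epi {X Y : C} (f : X ⟶ Y) : Epi f := ⟨fun g h e => leftCancellative f g h e⟩

instance mono {X Y : C} (f : X ⟶ Y) : Mono f := ⟨fun g h e => rightCancellative g h f e⟩

theorem isIso_of_hom_comp_eq_id {X Y : C} {a : X ⟶ Y} {b : Y ⟶ X} (h : a ≫ b = 𝟙 X) :
    IsIso a :=
  have : IsSplitMono a := .mk' ⟨b, h⟩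
  isIso_of_epi_of_isSplitMono a

theorem isIso_of_comp_hom_eq_id {X Y : C} {a : X ⟶ Y} {b : Y ⟶ X} (h : b ≫ a = 𝟙 Y) :
    IsIso a :=
  have : IsSplitEpi a := .mk' ⟨b, h⟩
  isIso_of_mono_of_isSplitEpi a

theorem isIso_left_of_isIso_comp {X Y Z : C} {a : X ⟶ Y} {b : Y ⟶ Z} (h : IsIso (a ≫ b)) :
    IsIso a :=
  isIso_of_hom_comp_eq_id (b := b ≫ inv (a ≫ b)) (by rw [← Category.assoc, IsIso.hom_inv_id])

theorem isIso_right_of_isIso_comp {X Y Z : C} {a : X ⟶ Y} {b : Y ⟶ Z} (h : IsIso (a ≫ b)) :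
    IsIso b :=
  have := isIso_left_of_isIso_comp h
  IsIso.of_isIso_comp_left a b

theorem not_isIso_comp_of_left {X Y Z : C} {a : X ⟶ Y} (h : ¬ IsIso a) (b : Y ⟶ Z) :
    ¬ IsIso (a ≫ b) :=
  fun hi => h (isIso_left_of_isIso_comp hi)

theorem not_isIso_comp_of_right {X Y Z : C} (a : X ⟶ Y) {b : Y ⟶ Z} (h : ¬ IsIso b) :
    ¬ IsIso (a ≫ b) :=
  fun hi => h (isIso_right_of_isIso_comp hi)

theorem equidivisible : Equidivisible C := by
  intro W X Y Z a b c d h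
  have hmem : (⟨W, Z, a ≫ b⟩ : CatArr C) ∈ rIdeal a ∩ rIdeal c := ⟨⟨Z, b, rfl⟩, ⟨Z, d, by rw [h]⟩⟩
  rcases rightRigid a c ⟨_, hmem⟩ with hs | hs
  · obtain ⟨u, rfl⟩ := exists_eq_comp_of_rIdeal_subset hs
    exact .inl ⟨u, rfl, (cancel_epi c).1 (by simpa using h.symm)⟩
  · obtain ⟨v, rfl⟩ := exists_eq_comp_of_rIdeal_subset hs
    exact .inr ⟨v, rfl, (cancel_epi a).1 (by simpa using h)⟩

theorem finite_supset {X Y : C} (a : X ⟶ Y) :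
    { S : Set (CatArr C) | IsPrincipalRightIdeal S ∧ rIdeal a ⊆ S }.Finite := by
  refine ((finite_ssupset a).insert (rIdeal a)).subset ?_
  rintro S ⟨hS, haS⟩
  by_cases he : S = rIdeal a
  · exact .inl he
  · exact .inr ⟨hS, haS.ssubset_of_ne (Ne.symm he)⟩

theorem LeftCoprime.of_isIso_left {Z A B : C} {p : Z ⟶ A} (q : Z ⟶ B) (hp : IsIso p) :
    LeftCoprime p q :=
  fun _ d f _ h _ => isIso_of_hom_comp_eq_id (b := f ≫ inv p) (by rw [← reassoc_of% h]; simp)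

theorem LeftCoprime.of_isIso_right {Z A B : C} (p : Z ⟶ A) {q : Z ⟶ B} (hq : IsIso q) :
    LeftCoprime p q :=
  (LeftCoprime.of_isIso_left p hq).symm

theorem RightCoprime.of_isIso_left {Z A B : C} {p : A ⟶ Z} (q : B ⟶ Z) (hp : IsIso p) :
    RightCoprime p q :=
  fun _ d f _ h _ => isIso_of_comp_hom_eq_id (b := inv p ≫ f) (by simp [h])

theorem RightCoprime.of_isIso_right {Z A B : C} (p : A ⟶ Z) {q : B ⟶ Z} (hq : IsIso q) :
    RightCoprime p q :=
  (RightCoprime.of_isIso_left p hq).symm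

theorem LeftCoprime.comp {Z A B B' : C} {p : Z ⟶ A} {q : Z ⟶ B} (h : LeftCoprime p q)
    (hq : ¬ IsIso q) (b : B ⟶ B') : LeftCoprime p (q ≫ b) := by
  intro M d f g hp hqb
  rcases equidivisible d g q b hqb.symm with ⟨u, hu, -⟩ | ⟨v, hv, -⟩
  · exact absurd (h q (u ≫ f) (𝟙 B) (by rw [hp, hu, Category.assoc]) (by simp)) hq
  · exact h d f v hp hv

theorem RightCoprime.comp {Z A B B' : C} {p : A ⟶ Z} {q : B ⟶ Z} (h : RightCoprime p q)
    (hq : ¬ IsIso q) (b : B' ⟶ B) : RightCoprime p (b ≫ q) := by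
  intro M d f g hp hbq
  rcases equidivisible b q g d hbq with ⟨u, -, hu⟩ | ⟨v, -, hv⟩
  · exact absurd (h q (f ≫ u) (𝟙 B) (by rw [hp, hu, Category.assoc]) (by simp)) hq
  · exact h d f v hp hv

structure LeftGcd {Z A B : C} (p : Z ⟶ A) (q : Z ⟶ B) where
  {mid : C}
  d : Z ⟶ mid
  q₁ : mid ⟶ A
  q₂ : mid ⟶ B
  fac₁ : p = d ≫ q₁
  fac₂ : q = d ≫ q₂
  coprime : LeftCoprime q₁ q₂

structure RightGcd {Z A B : C} (p : A ⟶ Z) (q : B ⟶ Z) where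
  {mid : C}
  d : mid ⟶ Z
  q₁ : A ⟶ mid
  q₂ : B ⟶ mid
  fac₁ : p = q₁ ≫ d
  fac₂ : q = q₂ ≫ d
  coprime : RightCoprime q₁ q₂

theorem nonempty_leftGcd {Z A B : C} (p : Z ⟶ A) (q : Z ⟶ B) : Nonempty (LeftGcd p q) := by
  let I : Set (Set (CatArr C)) :=
    { S | ∃ (M : C) (d : Z ⟶ M) (f : M ⟶ A) (g : M ⟶ B), p = d ≫ f ∧ q = d ≫ g ∧ S = rIdeal d }
  have hI : I.Finite := (finite_supset p).subset <| by
    rintro _ ⟨M, d, f, g, hf, -, rfl⟩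
    exact ⟨⟨Z, M, d, rfl⟩, hf ▸ rIdeal_comp_subset d f⟩
  obtain ⟨_, ⟨M, d, f, g, hf, hg, rfl⟩, hmin⟩ :=
    hI.exists_minimalFor id I ⟨_, Z, 𝟙 Z, p, q, by simp, by simp, rfl⟩
  refine ⟨⟨d, f, g, hf, hg, fun M' e f' g' hf' hg' => ?_⟩⟩
  have hde : rIdeal (d ≫ e) ∈ I :=
    ⟨M', d ≫ e, f', g', by rw [hf, hf', Category.assoc], by rw [hg, hg', Category.assoc], rfl⟩
  obtain ⟨t, ht⟩ := exists_eq_comp_of_rIdeal_subset (hmin hde (rIdeal_comp_subset d e))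
  exact isIso_of_hom_comp_eq_id ((cancel_epi d).1 (by simpa using ht.symm))

theorem nonempty_rightGcd {Z A B : C} (p : A ⟶ Z) (q : B ⟶ Z) : Nonempty (RightGcd p q) := by
  let I : Set (Set (CatArr C)) :=
    { S | ∃ (M : C) (f : A ⟶ M) (g : B ⟶ M) (d : M ⟶ Z), p = f ≫ d ∧ q = g ≫ d ∧ S = rIdeal f }
  have hI : I.Finite := (finite_supset p).subset <| by
    rintro _ ⟨M, f, g, d, hf, -, rfl⟩
    exact ⟨⟨A, M, f, rfl⟩, hf ▸ rIdeal_comp_subset f d⟩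
  obtain ⟨_, ⟨M, f, g, d, hf, hg, rfl⟩, hmax⟩ :=
    hI.exists_maximalFor id I ⟨_, Z, p, q, 𝟙 Z, by simp, by simp, rfl⟩
  refine ⟨⟨d, f, g, hf, hg, fun M' e f' g' hf' hg' => ?_⟩⟩
  have hf'I : rIdeal f' ∈ I :=
    ⟨M', f', g', e ≫ d, by rw [hf, hf', Category.assoc], by rw [hg, hg', Category.assoc], rfl⟩
  obtain ⟨t, ht⟩ :=
    exists_eq_comp_of_rIdeal_subset (hmax hf'I (hf' ▸ rIdeal_comp_subset f' e))
  exact isIso_of_hom_comp_eq_id (b := t)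
    ((cancel_epi f').1 (by rw [← Category.assoc, ← hf', ← ht, Category.comp_id]))

theorem LeftGcd.exists_eq_comp {Z A B M : C} {p : Z ⟶ A} {q : Z ⟶ B} (m : LeftGcd p q)
    (f : Z ⟶ M) (f₁ : M ⟶ A) (f₂ : M ⟶ B) (h₁ : p = f ≫ f₁) (h₂ : q = f ≫ f₂) :
    ∃ t : M ⟶ m.mid, m.d = f ≫ t := by
  rcases equidivisible f f₁ m.d m.q₁ (h₁.symm.trans m.fac₁) with ⟨u, hu, hu₁⟩ | ⟨v, hv, -⟩
  · have hu₂ : m.q₂ = u ≫ f₂ := (cancel_epi m.d).1 (by rw [← m.fac₂, ← reassoc_of% hu, ← h₂])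
    have := m.coprime u f₁ f₂ hu₁ hu₂
    exact ⟨inv u, by simp [hu]⟩
  · exact ⟨v, hv⟩

theorem RightGcd.exists_eq_comp {Z A B M : C} {p : A ⟶ Z} {q : B ⟶ Z} (m : RightGcd p q)
    (f : M ⟶ Z) (f₁ : A ⟶ M) (f₂ : B ⟶ M) (h₁ : p = f₁ ≫ f) (h₂ : q = f₂ ≫ f) :
    ∃ t : m.mid ⟶ M, m.d = t ≫ f := by
  rcases equidivisible f₁ f m.q₁ m.d (h₁.symm.trans m.fac₁) with ⟨u, -, hu⟩ | ⟨v, hv₁, hv⟩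
  · exact ⟨u, hu⟩
  · have hv₂ : m.q₂ = f₂ ≫ v := (cancel_mono m.d).1 (by rw [← m.fac₂, Category.assoc, ← hv, ← h₂])
    have := m.coprime v f₁ f₂ hv₁ hv₂
    exact ⟨inv v, by simp [hv]⟩

theorem LeftGcd.exists_iso {Z A B : C} {p : Z ⟶ A} {q : Z ⟶ B} (m m' : LeftGcd p q) :
    ∃ ρ : m.mid ⟶ m'.mid, IsIso ρ ∧ m.q₁ = ρ ≫ m'.q₁ ∧ m.q₂ = ρ ≫ m'.q₂ := by
  obtain ⟨t, ht⟩ := m'.exists_eq_comp m.d m.q₁ m.q₂ m.fac₁ m.fac₂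
  obtain ⟨s, hs⟩ := m.exists_eq_comp m'.d m'.q₁ m'.q₂ m'.fac₁ m'.fac₂
  have : IsIso t := isIso_of_hom_comp_eq_id (b := s)
    ((cancel_epi m.d).1 (by rw [← Category.assoc, ← ht, ← hs, Category.comp_id]))
  refine ⟨t, this, (cancel_epi m.d).1 ?_, (cancel_epi m.d).1 ?_⟩
  · rw [← m.fac₁, ← reassoc_of% ht, ← m'.fac₁]
  · rw [← m.fac₂, ← reassoc_of% ht, ← m'.fac₂]

theorem RightGcd.exists_iso {Z A B : C} {p : A ⟶ Z} {q : B ⟶ Z} (m m' : RightGcd p q) :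
    ∃ ρ : m.mid ⟶ m'.mid, IsIso ρ ∧ m'.q₁ = m.q₁ ≫ ρ ∧ m'.q₂ = m.q₂ ≫ ρ := by
  obtain ⟨t, ht⟩ := m'.exists_eq_comp m.d m.q₁ m.q₂ m.fac₁ m.fac₂
  obtain ⟨s, hs⟩ := m.exists_eq_comp m'.d m'.q₁ m'.q₂ m'.fac₁ m'.fac₂
  have : IsIso s := isIso_of_comp_hom_eq_id (b := t)
    ((cancel_mono m'.d).1 (by rw [Category.assoc, ← hs, ← ht, Category.id_comp]))
  refine ⟨s, this, (cancel_mono m'.d).1 ?_, (cancel_mono m'.d).1 ?_⟩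
  · rw [← m'.fac₁, Category.assoc, ← hs, ← m.fac₁]
  · rw [← m'.fac₂, Category.assoc, ← hs, ← m.fac₂]

noncomputable def leftGcd {Z A B : C} (p : Z ⟶ A) (q : Z ⟶ B) : LeftGcd p q :=
  Classical.choice (nonempty_leftGcd p q)

noncomputable def rightGcd {Z A B : C} (p : A ⟶ Z) (q : B ⟶ Z) : RightGcd p q :=
  Classical.choice (nonempty_rightGcd p q)

end

/-! ### Reduced words -/

/-- `pos w x` stands for `w x` and `neg w y` for `w y⁻¹`. -/
inductive Word : C → C → Type (max u v)
  | nil (X : C) : Word X X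
  | pos {X Y Z : C} (w : Word X Y) (x : Y ⟶ Z) : Word X Z
  | neg {X Y Z : C} (w : Word X Y) (y : Z ⟶ Y) : Word X Z

namespace Word

inductive IsReduced : ∀ {X Y : C}, Word X Y → Prop
  | nil (X : C) : IsReduced (nil X)
  | pos_nil {X Y : C} {x : X ⟶ Y} (hx : ¬ IsIso x) : IsReduced (pos (nil X) x)
  | neg_nil {X Y : C} {y : Y ⟶ X} (hy : ¬ IsIso y) : IsReduced (neg (nil X) y)
  | pos_neg {X Y Z T : C} {v : Word X Y} {y : Z ⟶ Y} {x : Z ⟶ T}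
      (hw : IsReduced (neg v y)) (hx : ¬ IsIso x) (hyx : LeftCoprime y x) :
      IsReduced (pos (neg v y) x)
  | neg_pos {X Y Z T : C} {v : Word X Y} {x : Y ⟶ Z} {y : T ⟶ Z}
      (hw : IsReduced (pos v x)) (hy : ¬ IsIso y) (hxy : RightCoprime x y) :
      IsReduced (neg (pos v x) y)

/-- `Shift w w' g`: `w'` is `w` with units inserted between its letters and `g` appended,
so that `w g = w'` in the universal groupoid. -/
inductive Shift : ∀ {X A B : C}, Word X A → Word X B → (A ⟶ B) → Prop
  | nil (X : C) : Shift (nil X) (nil X) (𝟙 X)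
  | pos {X Y Y' Z Z' : C} {v : Word X Y} {v' : Word X Y'} {g : Y ⟶ Y'} (hs : Shift v v' g)
      {x : Y ⟶ Z} {x' : Y' ⟶ Z'} {h : Z ⟶ Z'} [IsIso h] (he : x ≫ h = g ≫ x') :
      Shift (pos v x) (pos v' x') h
  | neg {X Y Y' Z Z' : C} {v : Word X Y} {v' : Word X Y'} {g : Y ⟶ Y'} (hs : Shift v v' g)
      {y : Z ⟶ Y} {y' : Z' ⟶ Y'} {h : Z ⟶ Z'} [IsIso h] (he : h ≫ y' = y ≫ g) :
      Shift (neg v y) (neg v' y') h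

namespace Shift

variable {X A B D : C} {w : Word X A} {w' : Word X B} {g : A ⟶ B}

theorem isIso (h : Shift w w' g) : IsIso g := by
  cases h <;> infer_instance

theorem refl (w : Word X A) : Shift w w (𝟙 A) := by
  induction w with
  | nil => exact .nil _
  | pos v x ih => exact .pos ih (by simp)
  | neg v y ih => exact .neg ih (by simp)

theorem symm (h : Shift w w' g) {g' : B ⟶ A} (hg : g ≫ g' = 𝟙 A) : Shift w' w g' := by
  induction h with
  | nil =>
      obtain rfl : g' = 𝟙 _ := by simpa using hg
      exact .nil _
  | @pos _ _ _ _ _ _ g hs _ _ h _ he ih =>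
      have := hs.isIso
      obtain rfl : g' = inv h := (IsIso.inv_eq_of_hom_inv_id hg).symm
      exact .pos (ih (g' := inv g) (by simp)) (by simp [← reassoc_of% he])
  | @neg _ _ _ _ _ _ g hs _ _ h _ he ih =>
      have := hs.isIso
      obtain rfl : g' = inv h := (IsIso.inv_eq_of_hom_inv_id hg).symm
      exact .neg (ih (g' := inv g) (by simp)) (by simp [← he])

theorem trans {w'' : Word X D} {g' : B ⟶ D} (h₁ : Shift w w' g) (h₂ : Shift w' w'' g') :
    Shift w w'' (g ≫ g') := by
  induction h₁ generalizing D with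
  | nil => cases h₂; simpa using Shift.nil _
  | pos _ he ih =>
      cases h₂ with
      | pos hs' he' => exact .pos (ih hs') (by rw [reassoc_of% he, he', Category.assoc])
  | neg _ he ih =>
      cases h₂ with
      | neg hs' he' => exact .neg (ih hs') (by rw [Category.assoc, he', reassoc_of% he])

end Shift

end Word

/-- The invertible tail cannot always be absorbed into the last letter: the empty word has none. -/
structure Tailed (S T : C) : Type (max u v) where
  {mid : C}
  word : Word S mid
  tail : mid ⟶ T
  [isIso_tail : IsIso tail]

attribute [instance] Tailed.isIso_tail

namespace Tailed

instance setoid (S T : C) : Setoid (Tailed S T) where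
  r p q := ∃ g, p.word.Shift q.word g ∧ g ≫ q.tail = p.tail
  iseqv.refl p := ⟨𝟙 _, .refl _, by simp⟩
  iseqv.symm := by
    rintro p q ⟨g, hs, he⟩
    have := hs.isIso
    exact ⟨inv g, hs.symm (by simp), by simp [← he]⟩
  iseqv.trans := by
    rintro p q r ⟨g, hs, he⟩ ⟨g', hs', he'⟩
    exact ⟨g ≫ g', hs.trans hs', by rw [Category.assoc, he', he]⟩

theorem equiv_mk {S T A B : C} {w : Word S A} {w' : Word S B} {u : A ⟶ T} {u' : B ⟶ T}
    [IsIso u] [IsIso u'] {g : A ⟶ B} (hs : w.Shift w' g) (he : g ≫ u' = u) :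
    (⟨w, u⟩ : Tailed S T) ≈ ⟨w', u'⟩ :=
  ⟨g, hs, he⟩

theorem pos_equiv {S Y A T : C} (v : Word S Y) (x : Y ⟶ A) (u : A ⟶ T) [IsIso u] :
    (⟨.pos v x, u⟩ : Tailed S T) ≈ ⟨.pos v (x ≫ u), 𝟙 T⟩ :=
  ⟨u, .pos (.refl v) (by simp), by simp⟩

theorem neg_equiv {S Y A T : C} (v : Word S Y) (y : A ⟶ Y) (u : A ⟶ T) [IsIso u] :
    (⟨.neg v y, u⟩ : Tailed S T) ≈ ⟨.neg v (inv u ≫ y), 𝟙 T⟩ :=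
  ⟨u, .neg (.refl v) (by simp), by simp⟩

end Tailed

/-! ### Multiplying reduced words by arrows and their inverses -/

namespace Word

variable {S : C}

def appendPos {A B : C} : Word S A → (A ⟶ B) → Word S B
  | nil _, e => pos (nil _) e
  | pos v x, e => pos v (x ≫ e)
  | neg v y, e => pos (neg v y) e

def appendNeg {A B : C} : Word S A → (B ⟶ A) → Word S B
  | nil _, e => neg (nil _) e
  | pos v x, e => neg (pos v x) e
  | neg v y, e => neg v (e ≫ y)

open Classical in
noncomputable def appendArrow {A B : C} (w : Word S A) (e : A ⟶ B) : Tailed S B :=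
  if h : IsIso e then { word := w, tail := e, isIso_tail := h } else ⟨w.appendPos e, 𝟙 B⟩

open Classical in
/-- `v q₁⁻¹ q₂` for left coprime `q₁`, `q₂`. -/
noncomputable def negPos {Y M T : C} (v : Word S Y) (q₁ : M ⟶ Y) (q₂ : M ⟶ T) : Tailed S T :=
  if _ : IsIso q₁ then v.appendArrow (inv q₁ ≫ q₂)
  else if _ : IsIso q₂ then ⟨neg v (inv q₂ ≫ q₁), 𝟙 T⟩
  else ⟨pos (neg v q₁) q₂, 𝟙 T⟩

open Classical in
/-- `v q₁ q₂⁻¹` for right coprime `q₁`, `q₂`. -/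
noncomputable def posNeg {A M T : C} (v : Word S A) (q₁ : A ⟶ M) (q₂ : T ⟶ M) : Tailed S T :=
  if _ : IsIso q₂ then v.appendArrow (q₁ ≫ inv q₂)
  else if _ : IsIso q₁ then ⟨v.appendNeg (q₂ ≫ inv q₁), 𝟙 T⟩
  else ⟨neg (pos v q₁) q₂, 𝟙 T⟩

variable [ReesCategory C]

/-- The reduced form of `w c`, for `w` reduced and `c` not invertible. -/
noncomputable def mulPos {A T : C} : Word S A → (A ⟶ T) → Tailed S T
  | nil _, c => ⟨pos (nil _) c, 𝟙 T⟩
  | pos v x, c => ⟨pos v (x ≫ c), 𝟙 T⟩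
  | neg v y, c => v.negPos (leftGcd y c).q₁ (leftGcd y c).q₂

/-- The reduced form of `w b⁻¹`, for `w` reduced and `b` not invertible. -/
noncomputable def mulNeg {A T : C} : Word S A → (T ⟶ A) → Tailed S T
  | nil _, b => ⟨neg (nil _) b, 𝟙 T⟩
  | neg v y, b => ⟨neg v (b ≫ y), 𝟙 T⟩
  | pos v x, b => v.posNeg (rightGcd x b).q₁ (rightGcd x b).q₂

end Word

namespace Tailed

variable [ReesCategory C] {S T T' : C}

open Classical in
noncomputable def mulHom (a : T ⟶ T') (p : Tailed S T) : Tailed S T' :=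
  if h : IsIso (p.tail ≫ a) then { word := p.word, tail := p.tail ≫ a, isIso_tail := h }
  else p.word.mulPos (p.tail ≫ a)

open Classical in
noncomputable def mulInv (a : T' ⟶ T) (p : Tailed S T) : Tailed S T' :=
  if _ : IsIso (a ≫ inv p.tail) then ⟨p.word, inv (a ≫ inv p.tail)⟩
  else p.word.mulNeg (a ≫ inv p.tail)

theorem mulHom_of_isIso {a : T ⟶ T'} {p : Tailed S T} (h : IsIso (p.tail ≫ a)) :
    p.mulHom a = { word := p.word, tail := p.tail ≫ a, isIso_tail := h } :=
  dif_pos h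

theorem mulHom_of_not_isIso {a : T ⟶ T'} {p : Tailed S T} (h : ¬ IsIso (p.tail ≫ a)) :
    p.mulHom a = p.word.mulPos (p.tail ≫ a) :=
  dif_neg h

theorem mulInv_of_isIso {a : T' ⟶ T} {p : Tailed S T} (h : IsIso (a ≫ inv p.tail)) :
    p.mulInv a = ⟨p.word, inv (a ≫ inv p.tail)⟩ :=
  dif_pos h

theorem mulInv_of_not_isIso {a : T' ⟶ T} {p : Tailed S T} (h : ¬ IsIso (a ≫ inv p.tail)) :
    p.mulInv a = p.word.mulNeg (a ≫ inv p.tail) :=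
  dif_neg h

theorem mk_id_mulHom {A : C} (w : Word S A) {b : A ⟶ T} (hb : ¬ IsIso b) :
    (⟨w, 𝟙 A⟩ : Tailed S A).mulHom b = w.mulPos b := by
  rw [mulHom_of_not_isIso (by simpa using hb)]
  simp

theorem mk_id_mulInv {A : C} (w : Word S A) {b : T ⟶ A} (hb : ¬ IsIso b) :
    (⟨w, 𝟙 A⟩ : Tailed S A).mulInv b = w.mulNeg b := by
  rw [mulInv_of_not_isIso (by simpa using hb)]
  simp

end Tailed

namespace Word

variable {S : C}

def EndsPos {A : C} : Word S A → Prop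
  | pos _ _ => True
  | _ => False

def EndsNeg {A : C} : Word S A → Prop
  | neg _ _ => True
  | _ => False

section Unfold

variable {A B M T : C}

theorem appendPos_of_not_endsPos {v : Word S A} (hv : ¬ v.EndsPos) (x : A ⟶ B) :
    v.appendPos x = pos v x := by
  cases v with
  | pos => exact hv.elim trivial
  | _ => rfl

theorem appendArrow_of_isIso (v : Word S A) (e : A ⟶ B) [IsIso e] :
    v.appendArrow e = ⟨v, e⟩ :=
  dif_pos ‹_›

theorem appendArrow_of_not_isIso (v : Word S A) {e : A ⟶ B} (he : ¬ IsIso e) :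
    v.appendArrow e = ⟨v.appendPos e, 𝟙 B⟩ :=
  dif_neg he

theorem negPos_of_isIso_left (v : Word S A) (q₁ : M ⟶ A) [IsIso q₁] (q₂ : M ⟶ T) :
    v.negPos q₁ q₂ = v.appendArrow (inv q₁ ≫ q₂) :=
  dif_pos ‹_›

theorem negPos_of_isIso_right (v : Word S A) {q₁ : M ⟶ A} (h₁ : ¬ IsIso q₁) (q₂ : M ⟶ T) [IsIso q₂] :
    v.negPos q₁ q₂ = ⟨neg v (inv q₂ ≫ q₁), 𝟙 T⟩ := by
  rw [negPos, dif_neg h₁, dif_pos ‹_›]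

theorem negPos_of_not_isIso (v : Word S A) {q₁ : M ⟶ A} {q₂ : M ⟶ T} (h₁ : ¬ IsIso q₁) (h₂ : ¬ IsIso q₂) :
    v.negPos q₁ q₂ = ⟨pos (neg v q₁) q₂, 𝟙 T⟩ := by
  rw [negPos, dif_neg h₁, dif_neg h₂]

theorem posNeg_of_isIso_right (v : Word S A) (q₁ : A ⟶ M) (q₂ : T ⟶ M) [IsIso q₂] :
    v.posNeg q₁ q₂ = v.appendArrow (q₁ ≫ inv q₂) :=
  dif_pos ‹_›

theorem posNeg_of_isIso_left (v : Word S A) (q₁ : A ⟶ M) [IsIso q₁] {q₂ : T ⟶ M} (h₂ : ¬ IsIso q₂) :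
    v.posNeg q₁ q₂ = ⟨v.appendNeg (q₂ ≫ inv q₁), 𝟙 T⟩ := by
  rw [posNeg, dif_neg h₂, dif_pos ‹_›]

theorem posNeg_of_not_isIso (v : Word S A) {q₁ : A ⟶ M} {q₂ : T ⟶ M} (h₁ : ¬ IsIso q₁) (h₂ : ¬ IsIso q₂) :
    v.posNeg q₁ q₂ = ⟨neg (pos v q₁) q₂, 𝟙 T⟩ := by
  rw [posNeg, dif_neg h₂, dif_neg h₁]

theorem appendArrow_pos {Y : C} (v : Word S Y) (x : Y ⟶ A) (e : A ⟶ T) :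
    (pos v x).appendArrow e ≈ ⟨pos v (x ≫ e), 𝟙 T⟩ := by
  by_cases he : IsIso e
  · rw [appendArrow_of_isIso]
    exact Tailed.pos_equiv v x e
  · rw [appendArrow_of_not_isIso _ he]
    rfl

theorem posNeg_id_neg {Y : C} (v : Word S Y) (y : A ⟶ Y) (δ : T ⟶ A) :
    (neg v y).posNeg (𝟙 A) δ ≈ ⟨neg v (δ ≫ y), 𝟙 T⟩ := by
  by_cases hδ : IsIso δ
  · rw [posNeg_of_isIso_right, appendArrow_of_isIso]
    simpa using Tailed.neg_equiv v y (inv δ)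
  · rw [posNeg_of_isIso_left _ _ hδ]
    simp [appendNeg]

variable [ReesCategory C]

theorem mulPos_eq_appendArrow {v : Word S A} (hv : ¬ v.EndsNeg) {c : A ⟶ T}
    (hc : ¬ IsIso c) : v.mulPos c = v.appendArrow c := by
  rw [appendArrow_of_not_isIso _ hc]
  cases v with
  | neg => exact hv.elim trivial
  | _ => rfl

end Unfold

namespace IsReduced

variable {Y A B T : C}

theorem not_isIso_of_pos {v : Word S Y} {x : Y ⟶ A} (h : (pos v x).IsReduced) : ¬ IsIso x := by
  cases h <;> assumption

theorem not_isIso_of_neg {v : Word S Y} {y : A ⟶ Y} (h : (neg v y).IsReduced) : ¬ IsIso y := by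
  cases h <;> assumption

theorem not_endsPos_of_pos {v : Word S Y} {x : Y ⟶ A} (h : (pos v x).IsReduced) :
    ¬ v.EndsPos := by
  cases h <;> exact id

theorem not_endsNeg_of_neg {v : Word S Y} {y : A ⟶ Y} (h : (neg v y).IsReduced) :
    ¬ v.EndsNeg := by
  cases h <;> exact id

variable [ReesCategory C]

theorem pos_comp {v : Word S Y} {x : Y ⟶ A} (h : (pos v x).IsReduced) (e : A ⟶ B) :
    (pos v (x ≫ e)).IsReduced := by
  cases h with
  | pos_nil hx => exact pos_nil (not_isIso_comp_of_left hx e)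
  | pos_neg hw hx hyx => exact pos_neg hw (not_isIso_comp_of_left hx e) (hyx.comp hx e)

theorem neg_comp {v : Word S Y} {y : A ⟶ Y} (h : (neg v y).IsReduced) (b : B ⟶ A) :
    (neg v (b ≫ y)).IsReduced := by
  cases h with
  | neg_nil hy => exact neg_nil (not_isIso_comp_of_right b hy)
  | neg_pos hw hy hxy => exact neg_pos hw (not_isIso_comp_of_right b hy) (hxy.comp hy b)

theorem appendArrow {v : Word S A} (h : v.IsReduced) (hv : ¬ v.EndsNeg) (e : A ⟶ B) :
    (v.appendArrow e).word.IsReduced := by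
  by_cases he : IsIso e
  · rwa [appendArrow_of_isIso]
  rw [appendArrow_of_not_isIso _ he]
  cases h with
  | nil => exact pos_nil he
  | pos_nil hx => exact pos_nil (not_isIso_comp_of_left hx e)
  | pos_neg hw hx hyx => exact (pos_neg hw hx hyx).pos_comp e
  | _ => exact hv.elim trivial

theorem negPos {Z M : C} {v : Word S Y} {y : Z ⟶ Y} (h : (neg v y).IsReduced) {d : Z ⟶ M}
    {q₁ : M ⟶ Y} {q₂ : M ⟶ T} (hy : y = d ≫ q₁) (hq : LeftCoprime q₁ q₂) :
    (v.negPos q₁ q₂).word.IsReduced := by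
  have hv : v.IsReduced := by cases h <;> first | exact nil _ | assumption
  by_cases h₁ : IsIso q₁
  · rw [negPos_of_isIso_left]
    exact hv.appendArrow h.not_endsNeg_of_neg _
  have hvq₁ : (neg v q₁).IsReduced := by
    cases h with
    | neg_nil => exact neg_nil h₁
    | neg_pos hw _ hxy => exact neg_pos hw h₁ (hxy.of_eq_comp hy)
  by_cases h₂ : IsIso q₂
  · rw [negPos_of_isIso_right _ h₁]
    exact hvq₁.neg_comp _
  · rw [negPos_of_not_isIso _ h₁ h₂]
    exact pos_neg hvq₁ h₂ hq

theorem posNeg {Z M : C} {v : Word S Y} {x : Y ⟶ Z} (h : (pos v x).IsReduced) {d : M ⟶ Z}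
    {q₁ : Y ⟶ M} {q₂ : T ⟶ M} (hx : x = q₁ ≫ d) (hq : RightCoprime q₁ q₂) :
    (v.posNeg q₁ q₂).word.IsReduced := by
  have hvq₁ (h₁ : ¬ IsIso q₁) : (pos v q₁).IsReduced := by
    cases h with
    | pos_nil => exact pos_nil h₁
    | pos_neg hw _ hyx => exact pos_neg hw h₁ (hyx.of_eq_comp hx)
  by_cases h₂ : IsIso q₂
  · rw [posNeg_of_isIso_right]
    by_cases h₃ : IsIso (q₁ ≫ inv q₂)
    · rw [appendArrow_of_isIso]
      cases h with
      | pos_nil => exact nil _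
      | pos_neg hw => exact hw
    have h₁ : ¬ IsIso q₁ := fun _ => h₃ inferInstance
    rw [appendArrow_of_not_isIso _ h₃, appendPos_of_not_endsPos h.not_endsPos_of_pos]
    cases h with
    | pos_nil => exact pos_nil h₃
    | pos_neg hw _ hyx => exact pos_neg hw h₃ (hyx.of_eq_comp (c := q₂ ≫ d) (by simp [hx]))
  by_cases h₁ : IsIso q₁
  · rw [posNeg_of_isIso_left _ _ h₂]
    have h₃ : ¬ IsIso (q₂ ≫ inv q₁) := fun h₃ => h₂ (isIso_left_of_isIso_comp h₃)
    cases h with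
    | pos_nil => exact neg_nil h₃
    | pos_neg hw => exact hw.neg_comp _
  · rw [posNeg_of_not_isIso _ h₁ h₂]
    exact neg_pos (hvq₁ h₁) h₂ hq

theorem mulPos {A : C} {w : Word S A} (h : w.IsReduced) {c : A ⟶ T} (hc : ¬ IsIso c) :
    (w.mulPos c).word.IsReduced := by
  cases h with
  | nil => exact pos_nil hc
  | pos_nil hx => exact pos_nil (not_isIso_comp_of_left hx c)
  | pos_neg hw hx hyx => exact (pos_neg hw hx hyx).pos_comp c
  | neg_nil hy => exact (neg_nil hy).negPos (leftGcd _ c).fac₁ (leftGcd _ c).coprime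
  | neg_pos hw hy hxy => exact (neg_pos hw hy hxy).negPos (leftGcd _ c).fac₁ (leftGcd _ c).coprime

theorem mulNeg {A : C} {w : Word S A} (h : w.IsReduced) {b : T ⟶ A} (hb : ¬ IsIso b) :
    (w.mulNeg b).word.IsReduced := by
  cases h with
  | nil => exact neg_nil hb
  | neg_nil hy => exact neg_nil (not_isIso_comp_of_right b hy)
  | neg_pos hw hy hxy => exact (neg_pos hw hy hxy).neg_comp b
  | pos_nil hx => exact (pos_nil hx).posNeg (rightGcd _ b).fac₁ (rightGcd _ b).coprime
  | pos_neg hw hx hyx => exact (pos_neg hw hx hyx).posNeg (rightGcd _ b).fac₁ (rightGcd _ b).coprime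

end IsReduced

end Word

section

namespace Word.Shift

variable {S A A' B B' M M' T : C} {v : Word S A} {v' : Word S A'} {g : A ⟶ A'}

theorem appendPos (hs : v.Shift v' g) {e : A ⟶ B} {e' : A' ⟶ B'} {h : B ⟶ B'} [IsIso h]
    (he : e ≫ h = g ≫ e') : (v.appendPos e).Shift (v'.appendPos e') h := by
  cases hs with
  | nil => exact .pos (.nil _) he
  | pos hs' he' => exact .pos hs' (by rw [Category.assoc, he, reassoc_of% he'])
  | neg hs' he' => exact .pos (.neg hs' he') he

theorem appendNeg (hs : v.Shift v' g) {e : B ⟶ A} {e' : B' ⟶ A'} {h : B ⟶ B'} [IsIso h]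
    (he : h ≫ e' = e ≫ g) : (v.appendNeg e).Shift (v'.appendNeg e') h := by
  cases hs with
  | nil => exact .neg (.nil _) he
  | pos hs' he' => exact .neg (.pos hs' he') he
  | neg hs' he' => exact .neg hs' (by rw [reassoc_of% he, he', Category.assoc])

theorem appendArrow (hs : v.Shift v' g) {e : A ⟶ B} {e' : A' ⟶ B} (he : e = g ≫ e') :
    v.appendArrow e ≈ v'.appendArrow e' := by
  have := hs.isIso
  by_cases h' : IsIso e'
  · have : IsIso e := by rw [he]; infer_instance
    rw [Word.appendArrow_of_isIso, Word.appendArrow_of_isIso]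
    exact ⟨g, hs, he.symm⟩
  · have h : ¬ IsIso e := by simpa [he] using h'
    rw [Word.appendArrow_of_not_isIso _ h, Word.appendArrow_of_not_isIso _ h']
    exact ⟨𝟙 B, hs.appendPos (by simp [he]), by simp⟩

theorem negPos (hs : v.Shift v' g) {q₁ : M ⟶ A} {q₂ : M ⟶ T} {q₁' : M' ⟶ A'} {q₂' : M' ⟶ T}
    {ρ : M ⟶ M'} [IsIso ρ] (hq₁ : q₁ ≫ g = ρ ≫ q₁') (hq₂ : q₂ = ρ ≫ q₂') :
    v.negPos q₁ q₂ ≈ v'.negPos q₁' q₂' := by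
  have := hs.isIso
  have iff₁ : IsIso q₁ ↔ IsIso q₁' := by
    rw [← isIso_comp_right_iff q₁ g, hq₁, isIso_comp_left_iff]
  have iff₂ : IsIso q₂ ↔ IsIso q₂' := by rw [hq₂, isIso_comp_left_iff]
  by_cases h₁ : IsIso q₁
  · have := iff₁.1 h₁
    rw [Word.negPos_of_isIso_left, Word.negPos_of_isIso_left]
    refine hs.appendArrow ?_
    rw [hq₂, ← Category.assoc, ← Category.assoc]
    congr 1
    rw [IsIso.inv_comp_eq, reassoc_of% hq₁]
    simp
  have h₁' : ¬ IsIso q₁' := iff₁.not.1 h₁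
  by_cases h₂ : IsIso q₂
  · have := iff₂.1 h₂
    rw [Word.negPos_of_isIso_right _ h₁, Word.negPos_of_isIso_right _ h₁']
    refine ⟨𝟙 T, .neg hs ?_, by simp⟩
    simp [hq₂, hq₁]
  · rw [Word.negPos_of_not_isIso _ h₁ h₂, Word.negPos_of_not_isIso _ h₁' (iff₂.not.1 h₂)]
    exact ⟨𝟙 T, .pos (.neg hs hq₁.symm) (by simp [hq₂]), by simp⟩

theorem posNeg (hs : v.Shift v' g) {q₁ : A ⟶ M} {q₂ : T ⟶ M} {q₁' : A' ⟶ M'} {q₂' : T ⟶ M'}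
    {ρ : M' ⟶ M} [IsIso ρ] (hq₁ : q₁ = g ≫ q₁' ≫ ρ) (hq₂ : q₂ = q₂' ≫ ρ) :
    v.posNeg q₁ q₂ ≈ v'.posNeg q₁' q₂' := by
  have := hs.isIso
  have iff₁ : IsIso q₁ ↔ IsIso q₁' := by rw [hq₁, isIso_comp_left_iff, isIso_comp_right_iff]
  have iff₂ : IsIso q₂ ↔ IsIso q₂' := by rw [hq₂, isIso_comp_right_iff]
  by_cases h₂ : IsIso q₂
  · have := iff₂.1 h₂
    rw [Word.posNeg_of_isIso_right, Word.posNeg_of_isIso_right]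
    refine hs.appendArrow ?_
    simp [hq₁, hq₂]
  have h₂' : ¬ IsIso q₂' := iff₂.not.1 h₂
  by_cases h₁ : IsIso q₁
  · have := iff₁.1 h₁
    rw [Word.posNeg_of_isIso_left _ _ h₂, Word.posNeg_of_isIso_left _ _ h₂']
    refine ⟨𝟙 T, hs.appendNeg ?_, by simp⟩
    simp [hq₁, hq₂]
  · rw [Word.posNeg_of_not_isIso _ h₁ h₂, Word.posNeg_of_not_isIso _ (iff₁.not.1 h₁) h₂']
    exact ⟨𝟙 T, .neg (.pos hs (h := inv ρ) (by simp [hq₁])) (by simp [hq₂]), by simp⟩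

end Word.Shift

variable [ReesCategory C] {S Y Z M T : C}

theorem LeftGcd.negPos_equiv (v : Word S Y) {y : Z ⟶ Y} {c : Z ⟶ T} (m m' : LeftGcd y c) :
    v.negPos m.q₁ m.q₂ ≈ v.negPos m'.q₁ m'.q₂ := by
  obtain ⟨ρ, _, h₁, h₂⟩ := m.exists_iso m'
  exact (Word.Shift.refl v).negPos (by simp [h₁]) h₂

theorem RightGcd.posNeg_equiv (v : Word S Y) {x : Y ⟶ Z} {b : T ⟶ Z} (m m' : RightGcd x b) :
    v.posNeg m.q₁ m.q₂ ≈ v.posNeg m'.q₁ m'.q₂ := by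
  obtain ⟨ρ, _, h₁, h₂⟩ := m.exists_iso m'
  exact (Word.Shift.refl v).posNeg (ρ := inv ρ) (by simp [h₁]) (by simp [h₂])

namespace Word

theorem mulPos_neg_equiv (v : Word S Y) {y : Z ⟶ Y} {c : Z ⟶ T} (m : LeftGcd y c) :
    (neg v y).mulPos c ≈ v.negPos m.q₁ m.q₂ :=
  LeftGcd.negPos_equiv v (leftGcd y c) m

theorem mulNeg_pos_equiv (v : Word S Y) {x : Y ⟶ Z} {b : T ⟶ Z} (m : RightGcd x b) :
    (pos v x).mulNeg b ≈ v.posNeg m.q₁ m.q₂ :=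
  RightGcd.posNeg_equiv v (rightGcd x b) m

theorem Shift.mulPos {A B : C} {w : Word S A} {w' : Word S B} {h : A ⟶ B} (hs : w.Shift w' h)
    {c : A ⟶ T} {c' : B ⟶ T} (hc : c = h ≫ c') : w.mulPos c ≈ w'.mulPos c' := by
  cases hs with
  | nil => exact Tailed.equiv_mk (.pos (.nil _) (by simpa using hc)) (Category.comp_id _)
  | pos hs' he =>
      exact Tailed.equiv_mk (.pos hs' (by simp [hc, reassoc_of% he])) (Category.comp_id _)
  | @neg _ _ _ _ _ v' g hs' y y' _ _ he =>
      have := hs'.isIso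
      let m := leftGcd y c
      let m' : LeftGcd y' c' :=
        ⟨inv h ≫ m.d, m.q₁ ≫ g, m.q₂, by simp [← reassoc_of% m.fac₁, ← he],
          by simp [← m.fac₂, hc], (m.coprime.symm.comp_isIso g).symm⟩
      exact Setoid.trans (hs'.negPos (ρ := 𝟙 _) (q₁' := m'.q₁) (q₂' := m'.q₂)
        (Category.id_comp _).symm (Category.id_comp _).symm)
        (Setoid.symm (mulPos_neg_equiv v' m'))

theorem Shift.mulNeg {A B : C} {w : Word S A} {w' : Word S B} {h : A ⟶ B} (hs : w.Shift w' h)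
    {b : T ⟶ A} {b' : T ⟶ B} (hb : b' = b ≫ h) : w.mulNeg b ≈ w'.mulNeg b' := by
  cases hs with
  | nil => exact Tailed.equiv_mk (.neg (.nil _) (by simpa using hb)) (Category.comp_id _)
  | neg hs' he => exact Tailed.equiv_mk (.neg hs' (by simp [hb, he])) (Category.comp_id _)
  | @pos _ _ _ _ _ v' g hs' x x' _ _ he =>
      have := hs'.isIso
      let m := rightGcd x b
      let m' : RightGcd x' b' :=
        ⟨m.d ≫ h, inv g ≫ m.q₁, m.q₂, by simp [← reassoc_of% m.fac₁, he],
          by simp [← reassoc_of% m.fac₂, hb], (m.coprime.symm.isIso_comp (inv g)).symm⟩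
      exact Setoid.trans (hs'.posNeg (ρ := 𝟙 _) (q₁' := m'.q₁) (q₂' := m'.q₂)
        (by simp [m', m]) (Category.comp_id _).symm)
        (Setoid.symm (mulNeg_pos_equiv v' m'))

end Word

namespace Tailed

variable {T' : C}

theorem isReduced_mulHom (a : T ⟶ T') {p : Tailed S T} (hp : p.word.IsReduced) :
    (p.mulHom a).word.IsReduced := by
  by_cases h : IsIso (p.tail ≫ a)
  · rwa [mulHom_of_isIso h]
  · rw [mulHom_of_not_isIso h]
    exact hp.mulPos h

theorem isReduced_mulInv (a : T' ⟶ T) {p : Tailed S T} (hp : p.word.IsReduced) :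
    (p.mulInv a).word.IsReduced := by
  by_cases h : IsIso (a ≫ inv p.tail)
  · rwa [mulInv_of_isIso h]
  · rw [mulInv_of_not_isIso h]
    exact hp.mulNeg h

theorem mulHom_congr (a : T ⟶ T') {p q : Tailed S T} (hpq : p ≈ q) : p.mulHom a ≈ q.mulHom a := by
  obtain ⟨g, hs, he⟩ := hpq
  have := hs.isIso
  have hg : p.tail ≫ a = g ≫ q.tail ≫ a := by rw [← he, Category.assoc]
  by_cases h : IsIso (q.tail ≫ a)
  · have h' : IsIso (p.tail ≫ a) := by rw [hg]; infer_instance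
    rw [mulHom_of_isIso h, mulHom_of_isIso h']
    exact ⟨g, hs, hg.symm⟩
  · have h' : ¬ IsIso (p.tail ≫ a) := by rwa [hg, isIso_comp_left_iff]
    rw [mulHom_of_not_isIso h, mulHom_of_not_isIso h']
    exact hs.mulPos hg

theorem mulInv_congr (a : T' ⟶ T) {p q : Tailed S T} (hpq : p ≈ q) : p.mulInv a ≈ q.mulInv a := by
  obtain ⟨g, hs, he⟩ := hpq
  have := hs.isIso
  have hg : a ≫ inv q.tail = (a ≫ inv p.tail) ≫ g := by simp [← he]
  by_cases h : IsIso (a ≫ inv q.tail)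
  · have h' : IsIso (a ≫ inv p.tail) := by
      rw [← isIso_comp_right_iff _ g, ← hg]; infer_instance
    rw [mulInv_of_isIso h, mulInv_of_isIso h']
    exact ⟨g, hs, by simp [hg]⟩
  · have h' : ¬ IsIso (a ≫ inv p.tail) := by rwa [hg, isIso_comp_right_iff] at h
    rw [mulInv_of_not_isIso h, mulInv_of_not_isIso h']
    exact hs.mulNeg hg

end Tailed

end

/-! ### The action laws -/

section

variable [ReesCategory C] {S : C}

namespace Tailed

theorem pos_mulHom {Y A T : C} (v : Word S Y) (x : Y ⟶ A) (b : A ⟶ T) :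
    (⟨.pos v x, 𝟙 A⟩ : Tailed S A).mulHom b ≈ ⟨.pos v (x ≫ b), 𝟙 T⟩ := by
  by_cases hb : IsIso b
  · rw [mulHom_of_isIso (by simpa using hb)]
    simpa using pos_equiv v x b
  · rw [mk_id_mulHom _ hb]
    rfl

end Tailed

namespace Word

theorem appendArrow_mulHom {A B T : C} {v : Word S A} (hv : ¬ v.EndsNeg) (e : A ⟶ B)
    (b : B ⟶ T) : (v.appendArrow e).mulHom b ≈ v.appendArrow (e ≫ b) := by
  by_cases he : IsIso e
  · rw [appendArrow_of_isIso]
    by_cases heb : IsIso (e ≫ b)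
    · rw [Tailed.mulHom_of_isIso heb, appendArrow_of_isIso]
    · rw [Tailed.mulHom_of_not_isIso (p := ⟨v, e⟩) heb, mulPos_eq_appendArrow hv heb]
  · rw [appendArrow_of_not_isIso _ he, appendArrow_of_not_isIso _ (not_isIso_comp_of_left he b)]
    cases v with
    | nil => exact Tailed.pos_mulHom _ _ _
    | pos v x => simpa [appendPos] using Tailed.pos_mulHom v (x ≫ e) b
    | neg => exact hv.elim trivial

theorem negPos_mulHom {Y Z A T : C} {v : Word S Y} {y : Z ⟶ Y} (hw : (neg v y).IsReduced)
    {c : Z ⟶ A} (m : LeftGcd y c) (b : A ⟶ T) :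
    (v.negPos m.q₁ m.q₂).mulHom b ≈ (neg v y).mulPos (c ≫ b) := by
  have hv := hw.not_endsNeg_of_neg
  by_cases h₁ : IsIso m.q₁
  · refine Setoid.symm (Setoid.trans (mulPos_neg_equiv v ⟨m.d, m.q₁, m.q₂ ≫ b, m.fac₁,
      (reassoc_of% m.fac₂) b, .of_isIso_left _ h₁⟩) ?_)
    rw [negPos_of_isIso_left, negPos_of_isIso_left]
    exact Setoid.symm (by simpa using appendArrow_mulHom hv (inv m.q₁ ≫ m.q₂) b)
  by_cases h₂ : IsIso m.q₂
  · let n := leftGcd (inv m.q₂ ≫ m.q₁) b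
    refine Setoid.symm (Setoid.trans (mulPos_neg_equiv v ⟨m.d ≫ m.q₂ ≫ n.d, n.q₁, n.q₂,
      by simp [m.fac₁, ← n.fac₁], by simp [m.fac₂, ← n.fac₂], n.coprime⟩) (Setoid.symm ?_))
    rw [negPos_of_isIso_right _ h₁]
    by_cases hb : IsIso b
    · have : IsIso n.d := LeftCoprime.of_isIso_right _ hb n.d n.q₁ n.q₂ n.fac₁ n.fac₂
      have : IsIso n.q₂ := isIso_right_of_isIso_comp (n.fac₂ ▸ hb)
      have hn₁ : ¬ IsIso n.q₁ := fun _ => h₁ (by simpa [← n.fac₁] using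
        (inferInstance : IsIso (m.q₂ ≫ n.d ≫ n.q₁)))
      rw [Tailed.mulHom_of_isIso (by simpa using hb), negPos_of_isIso_right _ hn₁]
      exact ⟨b, .neg (.refl v) (by simp [n.fac₂, n.fac₁]), by simp⟩
    · rw [Tailed.mk_id_mulHom _ hb]
      rfl
  · have h₂b := not_isIso_comp_of_left h₂ b
    refine Setoid.symm (Setoid.trans (mulPos_neg_equiv v ⟨m.d, m.q₁, m.q₂ ≫ b, m.fac₁,
      (reassoc_of% m.fac₂) b, m.coprime.comp h₂ b⟩) ?_)
    rw [negPos_of_not_isIso _ h₁ h₂, negPos_of_not_isIso _ h₁ h₂b]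
    exact Setoid.symm (Tailed.pos_mulHom _ _ _)

theorem mulPos_mulHom {A B T : C} {w : Word S A} (hw : w.IsReduced) {c : A ⟶ B}
    (hc : ¬ IsIso c) (b : B ⟶ T) : (w.mulPos c).mulHom b ≈ w.mulPos (c ≫ b) := by
  cases w with
  | neg v y => exact negPos_mulHom hw (leftGcd y c) b
  | _ =>
      rw [mulPos_eq_appendArrow id hc, mulPos_eq_appendArrow id (not_isIso_comp_of_left hc b)]
      exact appendArrow_mulHom id c b

end Word

namespace Tailed

theorem mulHom_mulHom {T₁ T₂ T₃ : C} (a : T₁ ⟶ T₂) (b : T₂ ⟶ T₃) {p : Tailed S T₁}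
    (hp : p.word.IsReduced) : (p.mulHom a).mulHom b ≈ p.mulHom (a ≫ b) := by
  by_cases ha : IsIso (p.tail ≫ a)
  · rw [mulHom_of_isIso ha]
    by_cases hb : IsIso (p.tail ≫ a ≫ b)
    · rw [mulHom_of_isIso hb, mulHom_of_isIso (by simpa using hb)]
      simp
    · rw [mulHom_of_not_isIso hb, mulHom_of_not_isIso (by simpa using hb)]
      simp
  · have hab : ¬ IsIso (p.tail ≫ a ≫ b) := by
      rw [← Category.assoc]; exact not_isIso_comp_of_left ha b
    rw [mulHom_of_not_isIso ha, mulHom_of_not_isIso hab]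
    simpa using Word.mulPos_mulHom hp ha b

end Tailed

namespace Word

theorem mulPos_equiv_of_isReduced {Y A : C} {v : Word S Y} {x : Y ⟶ A}
    (h : (pos v x).IsReduced) : v.mulPos x ≈ ⟨pos v x, 𝟙 A⟩ := by
  cases h with
  | pos_nil => rfl
  | pos_neg hw hx hyx =>
      refine Setoid.trans (mulPos_neg_equiv _ ⟨𝟙 _, _, x, by simp, by simp, hyx⟩) ?_
      rw [negPos_of_not_isIso _ hw.not_isIso_of_neg hx]

theorem mulNeg_equiv_of_isReduced {Y A : C} {v : Word S Y} {y : A ⟶ Y}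
    (h : (neg v y).IsReduced) : v.mulNeg y ≈ ⟨neg v y, 𝟙 A⟩ := by
  cases h with
  | neg_nil => rfl
  | neg_pos hw hy hxy =>
      refine Setoid.trans (mulNeg_pos_equiv _ ⟨𝟙 _, _, y, by simp, by simp, hxy⟩) ?_
      rw [posNeg_of_not_isIso _ hw.not_isIso_of_pos hy]

theorem appendNeg_mulPos {Y A B : C} {v : Word S Y} {x : Y ⟶ A} (h : (pos v x).IsReduced)
    {β : B ⟶ Y} (hβ : ¬ IsIso β) : (v.appendNeg β).mulPos (β ≫ x) ≈ ⟨pos v x, 𝟙 A⟩ := by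
  cases h with
  | pos_nil hx =>
      refine Setoid.trans (mulPos_neg_equiv (nil S)
        ⟨β, 𝟙 _, _, by simp, rfl, .of_isIso_left _ inferInstance⟩) ?_
      rw [negPos_of_isIso_left, IsIso.inv_id, Category.id_comp, appendArrow_of_not_isIso _ hx]
      rfl
  | pos_neg hw hx hyx =>
      refine Setoid.trans (mulPos_neg_equiv _ ⟨β, _, _, rfl, rfl, hyx⟩) ?_
      rw [negPos_of_not_isIso _ hw.not_isIso_of_neg hx]

theorem appendPos_mulNeg {Y A B : C} {v : Word S Y} {y : A ⟶ Y} (h : (neg v y).IsReduced)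
    {e : Y ⟶ B} (he : ¬ IsIso e) : (v.appendPos e).mulNeg (y ≫ e) ≈ ⟨neg v y, 𝟙 A⟩ := by
  cases h with
  | neg_nil hy =>
      refine Setoid.trans (mulNeg_pos_equiv (nil S)
        ⟨e, 𝟙 _, _, by simp, rfl, .of_isIso_left _ inferInstance⟩) ?_
      rw [posNeg_of_isIso_left _ _ hy, IsIso.inv_id, Category.comp_id]
      rfl
  | neg_pos hw hy hxy =>
      refine Setoid.trans (mulNeg_pos_equiv _ ⟨e, _, _, rfl, rfl, hxy⟩) ?_
      rw [posNeg_of_not_isIso _ hw.not_isIso_of_pos hy]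

theorem posNeg_mulHom {Y Z A : C} {v : Word S Y} {x : Y ⟶ Z} (hw : (pos v x).IsReduced)
    {b : A ⟶ Z} (hb : ¬ IsIso b) (n : RightGcd x b) :
    (v.posNeg n.q₁ n.q₂).mulHom b ≈ ⟨pos v x, 𝟙 Z⟩ := by
  have hx := hw.not_isIso_of_pos
  by_cases h₂ : IsIso n.q₂
  · have he : n.q₁ ≫ inv n.q₂ ≫ b = x := by simp [n.fac₁, n.fac₂]
    rw [posNeg_of_isIso_right]
    by_cases h₃ : IsIso (n.q₁ ≫ inv n.q₂)
    · have hx' : ¬ IsIso ((n.q₁ ≫ inv n.q₂) ≫ b) := by rwa [Category.assoc, he]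
      rw [appendArrow_of_isIso, Tailed.mulHom_of_not_isIso hx']
      simpa only [Category.assoc, he] using mulPos_equiv_of_isReduced hw
    · rw [appendArrow_of_not_isIso _ h₃, appendPos_of_not_endsPos hw.not_endsPos_of_pos]
      simpa only [Category.assoc, he] using Tailed.pos_mulHom v (n.q₁ ≫ inv n.q₂) b
  by_cases h₁ : IsIso n.q₁
  · have he : (n.q₂ ≫ inv n.q₁) ≫ x = b := by simp [n.fac₁, n.fac₂]
    have := appendNeg_mulPos hw (β := n.q₂ ≫ inv n.q₁) fun h => h₂ (isIso_left_of_isIso_comp h)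
    rw [he] at this
    rwa [posNeg_of_isIso_left _ _ h₂, Tailed.mk_id_mulHom _ hb]
  · rw [posNeg_of_not_isIso _ h₁ h₂, Tailed.mk_id_mulHom _ hb]
    refine Setoid.trans (mulPos_neg_equiv (pos v n.q₁)
      ⟨n.q₂, 𝟙 _, n.d, by simp, n.fac₂, .of_isIso_left _ inferInstance⟩) ?_
    rw [negPos_of_isIso_left, IsIso.inv_id, Category.id_comp]
    simpa [← n.fac₁] using appendArrow_pos v n.q₁ n.d

theorem mulNeg_mulHom {A T : C} {w : Word S A} (hw : w.IsReduced) {b : T ⟶ A}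
    (hb : ¬ IsIso b) : (w.mulNeg b).mulHom b ≈ ⟨w, 𝟙 A⟩ := by
  cases w with
  | nil =>
      rw [mulNeg, Tailed.mk_id_mulHom _ hb]
      refine Setoid.trans (mulPos_neg_equiv (nil S)
        ⟨b, 𝟙 _, 𝟙 _, by simp, by simp, .of_isIso_left _ inferInstance⟩) ?_
      rw [negPos_of_isIso_left, appendArrow_of_isIso]
      simp
  | neg v y =>
      rw [mulNeg, Tailed.mk_id_mulHom _ hb]
      refine Setoid.trans (mulPos_neg_equiv v
        ⟨b, y, 𝟙 _, rfl, by simp, .of_isIso_right _ inferInstance⟩) ?_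
      rw [negPos_of_isIso_right _ hw.not_isIso_of_neg]
      simp
  | pos v x => exact posNeg_mulHom hw hb (rightGcd x b)

theorem negPos_mulInv {Y Z A T : C} {v : Word S Y} {y : Z ⟶ Y} (hw : (neg v y).IsReduced)
    (u : Z ⟶ A) [IsIso u] {b : A ⟶ T} (hb : ¬ IsIso b) (m : LeftGcd y (u ≫ b)) :
    (v.negPos m.q₁ m.q₂).mulInv b ≈ ⟨neg v y, u⟩ := by
  have hy : (neg v (inv u ≫ y)).IsReduced := hw.neg_comp (inv u)
  have hb' : b = inv u ≫ m.d ≫ m.q₂ := by simp [← m.fac₂]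
  refine Setoid.trans ?_ (Setoid.symm (Tailed.neg_equiv v y u))
  by_cases h₁ : IsIso m.q₁
  · have he : (inv u ≫ y) ≫ inv m.q₁ ≫ m.q₂ = b := by simp [hb', m.fac₁]
    rw [negPos_of_isIso_left]
    by_cases h₃ : IsIso (inv m.q₁ ≫ m.q₂)
    · have hbe : b ≫ inv (inv m.q₁ ≫ m.q₂) = inv u ≫ y := by simp [← he]
      rw [appendArrow_of_isIso, Tailed.mulInv_of_not_isIso (by rw [hbe]; exact hy.not_isIso_of_neg)]
      simpa only [hbe] using mulNeg_equiv_of_isReduced hy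
    · rw [appendArrow_of_not_isIso _ h₃, Tailed.mk_id_mulInv _ hb]
      have := appendPos_mulNeg hy h₃
      rwa [he] at this
  by_cases h₂ : IsIso m.q₂
  · rw [negPos_of_isIso_right _ h₁, Tailed.mk_id_mulInv _ hb, mulNeg]
    have : b ≫ inv m.q₂ ≫ m.q₁ = inv u ≫ y := by simp [hb', m.fac₁]
    rw [this]
  · rw [negPos_of_not_isIso _ h₁ h₂, Tailed.mk_id_mulInv _ hb]
    refine Setoid.trans (mulNeg_pos_equiv (neg v m.q₁)
      ⟨m.q₂, 𝟙 _, inv u ≫ m.d, by simp, by simp [hb'], .of_isIso_left _ inferInstance⟩) ?_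
    simpa [m.fac₁] using posNeg_id_neg v m.q₁ (inv u ≫ m.d)

theorem mulPos_mulInv {A B T : C} {w : Word S A} (hw : w.IsReduced) (u : A ⟶ B) [IsIso u]
    {b : B ⟶ T} (hb : ¬ IsIso b) : (w.mulPos (u ≫ b)).mulInv b ≈ ⟨w, u⟩ := by
  cases w with
  | nil =>
      rw [mulPos, Tailed.mk_id_mulInv _ hb]
      refine Setoid.trans (mulNeg_pos_equiv (nil S)
        ⟨b, u, 𝟙 _, rfl, by simp, .of_isIso_right _ inferInstance⟩) ?_
      rw [posNeg_of_isIso_right, appendArrow_of_isIso]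
      simp
  | pos v x =>
      have hxu := not_isIso_comp_of_left hw.not_isIso_of_pos u
      rw [mulPos, Tailed.mk_id_mulInv _ hb]
      refine Setoid.trans (mulNeg_pos_equiv v
        ⟨b, x ≫ u, 𝟙 _, by simp, by simp, .of_isIso_right _ inferInstance⟩) ?_
      rw [posNeg_of_isIso_right, IsIso.inv_id, Category.comp_id, appendArrow_of_not_isIso _ hxu,
        appendPos_of_not_endsPos hw.not_endsPos_of_pos]
      exact Setoid.symm (Tailed.pos_equiv v x u)
  | neg v y => exact negPos_mulInv hw u hb (leftGcd y (u ≫ b))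

end Word

namespace Tailed

variable {T T' : C}

theorem mulInv_mulHom (a : T' ⟶ T) {p : Tailed S T} (hp : p.word.IsReduced) :
    (p.mulInv a).mulHom a ≈ p := by
  obtain ⟨w, u⟩ := p
  by_cases h : IsIso (a ≫ inv u)
  · have : IsIso a := by simpa using h
    rw [mulInv_of_isIso h, mulHom_of_isIso inferInstance]
    exact ⟨𝟙 _, .refl w, by simp⟩
  · rw [mulInv_of_not_isIso h]
    calc (w.mulNeg (a ≫ inv u)).mulHom a
        ≈ (w.mulNeg (a ≫ inv u)).mulHom ((a ≫ inv u) ≫ u) := by simp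
      _ ≈ ((w.mulNeg (a ≫ inv u)).mulHom (a ≫ inv u)).mulHom u :=
          Setoid.symm (mulHom_mulHom _ _ (hp.mulNeg h))
      _ ≈ (⟨w, 𝟙 _⟩ : Tailed S _).mulHom u := mulHom_congr u (Word.mulNeg_mulHom hp h)
      _ ≈ ⟨w, u⟩ := by rw [mulHom_of_isIso inferInstance]; simp

theorem mulHom_mulInv (a : T ⟶ T') {p : Tailed S T} (hp : p.word.IsReduced) :
    (p.mulHom a).mulInv a ≈ p := by
  obtain ⟨w, u⟩ := p
  by_cases h : IsIso (u ≫ a)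
  · have : IsIso a := isIso_right_of_isIso_comp h
    rw [mulHom_of_isIso h, mulInv_of_isIso inferInstance]
    simp
  · rw [mulHom_of_not_isIso h]
    exact Word.mulPos_mulInv hp u fun _ => h inferInstance

end Tailed

end

/-! ### The action groupoid -/

section

namespace Word

variable {S : C}

def eval {T : C} : Word S T → Option (S ⟶ T)
  | nil _ => some (𝟙 _)
  | pos w x => w.eval.map (· ≫ x)
  | neg _ _ => none

theorem Shift.map_eval {A B : C} {w : Word S A} {w' : Word S B} {g : A ⟶ B}
    (h : w.Shift w' g) : w.eval.map (· ≫ g) = w'.eval := by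
  induction h with
  | nil => simp [eval]
  | pos _ he ih => simp [eval, ← ih, Option.map_map, Function.comp_def, he]
  | neg => rfl

end Word

namespace Tailed

variable {S T : C}

def eval (p : Tailed S T) : Option (S ⟶ T) :=
  p.word.eval.map (· ≫ p.tail)

theorem eval_eq_of_equiv {p q : Tailed S T} (h : p ≈ q) : p.eval = q.eval := by
  obtain ⟨g, hs, he⟩ := h
  simp [eval, ← hs.map_eval, Option.map_map, Function.comp_def, he]

theorem eval_mulHom_nil [ReesCategory C] (f : S ⟶ T) :
    ((⟨.nil S, 𝟙 S⟩ : Tailed S S).mulHom f).eval = some f := by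
  by_cases hf : IsIso f
  · rw [mulHom_of_isIso (by simpa using hf)]
    simp [eval, Word.eval]
  · rw [mk_id_mulHom _ hf]
    simp [eval, Word.eval, Word.mulPos]

end Tailed

/-- Reduced words from `S` to `T`, up to the insertion of units: the arrows `S ⟶ T` of the
universal groupoid. -/
abbrev NormalForm (S T : C) : Type (max u v) :=
  Quotient (inferInstance : Setoid { p : Tailed S T // p.word.IsReduced })

variable [ReesCategory C]

noncomputable def NormalForm.act {S T T' : C} (a : T ⟶ T') : NormalForm S T ≃ NormalForm S T' where
  toFun := Quotient.map (fun p => ⟨p.1.mulHom a, Tailed.isReduced_mulHom a p.2⟩)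
    fun _ _ => Tailed.mulHom_congr a
  invFun := Quotient.map (fun p => ⟨p.1.mulInv a, Tailed.isReduced_mulInv a p.2⟩)
    fun _ _ => Tailed.mulInv_congr a
  left_inv := Quotient.ind fun p => Quotient.sound (Tailed.mulHom_mulInv a p.2)
  right_inv := Quotient.ind fun p => Quotient.sound (Tailed.mulInv_mulHom a p.2)

end

section

variable [ReesCategory C]

namespace NormalForm

variable {S T : C}

theorem act_mk {T' : C} (a : T ⟶ T') (p : { p : Tailed S T // p.word.IsReduced }) :
    act a ⟦p⟧ = ⟦⟨p.1.mulHom a, Tailed.isReduced_mulHom a p.2⟩⟧ :=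
  rfl

theorem act_id : act (S := S) (𝟙 T) = Equiv.refl _ :=
  Equiv.ext <| Quotient.ind fun p => Quotient.sound (show p.1.mulHom (𝟙 T) ≈ p.1 by
    rw [Tailed.mulHom_of_isIso inferInstance]
    simp)

theorem act_comp {T' T'' : C} (a : T ⟶ T') (b : T' ⟶ T'') :
    act (S := S) (a ≫ b) = (act a).trans (act b) :=
  Equiv.ext <| Quotient.ind fun p => Quotient.sound (Setoid.symm (Tailed.mulHom_mulHom a b p.2))

def empty (X : C) : NormalForm X X :=
  ⟦⟨⟨.nil X, 𝟙 X⟩, .nil X⟩⟧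

theorem injective_act_empty (X Y : C) :
    Function.Injective fun f : X ⟶ Y => act f (empty X) := by
  intro f g h
  dsimp only at h
  rw [empty, act_mk, act_mk, Quotient.eq] at h
  have := Tailed.eval_eq_of_equiv h
  rwa [Tailed.eval_mulHom_nil, Tailed.eval_mulHom_nil, Option.some_inj] at this

end NormalForm

variable (C) in
/-- Lifted to `Type (max u v)`, where the universal property of `ι` applies. -/
def ActionGroupoid : Type (max u v) := ULift.{v} C

noncomputable instance : Groupoid.{max u v} (ActionGroupoid C) where
  Hom X Y := (Σ S, NormalForm S X.down) ≃ (Σ S, NormalForm S Y.down)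
  id _ := Equiv.refl _
  comp f g := f.trans g
  id_comp := Equiv.refl_trans
  comp_id := Equiv.trans_refl
  assoc := Equiv.trans_assoc
  inv f := f.symm
  inv_comp := Equiv.symm_trans_self
  comp_inv := Equiv.self_trans_symm

noncomputable def actionFunctor : C ⥤ ActionGroupoid C where
  obj T := ⟨T⟩
  map a := Equiv.sigmaCongrRight fun _ => NormalForm.act a
  map_id _ := Equiv.ext fun _ => by simp [NormalForm.act_id]; rfl
  map_comp _ _ := Equiv.ext fun _ => by simp [NormalForm.act_comp]; rfl

instance : (actionFunctor (C := C)).Faithful where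
  map_injective {X Y} _ _ h :=
    NormalForm.injective_act_empty X Y <|
      sigma_mk_injective (β := (NormalForm · Y)) (Equiv.congr_fun h ⟨X, .empty X⟩)

end

end ReesCategory

theorem skeletal_rees_embeds_in_universal_groupoid_general
    (h : IsLeftReesCategory C) (hRC : RightCancellativeCat C)
    {G : Type (max u v)} [Groupoid.{max u v} G] (ι : C ⥤ G)
    (huniv : ∀ {H : Type (max u v)} [Groupoid.{max u v} H] (F : C ⥤ H),
        ∃! Θ : G ⥤ H, ι ⋙ Θ = F) :
    ι.Faithful := by
  have : ReesCategory C := ⟨h.1, hRC, h.2.1, h.2.2⟩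
  obtain ⟨Θ, hΘ, -⟩ := huniv ReesCategory.actionFunctor
  exact Functor.Faithful.of_comp_eq hΘ

/-- Every skeletal Rees category embeds in its universal groupoid: if `C`
is a skeletal left Rees category which is also right cancellative, and `ι : C ⥤ G` is a
functor to a groupoid satisfying the universal property that every functor from `C` to a
groupoid factors uniquely through `ι`, then `ι` is faithful. -/
theorem skeletal_rees_embeds_in_universal_groupoid
    (h : IsLeftReesCategory C) (hsk : SkeletalCat C) (hRC : RightCancellativeCat C)
    {G : Type (max u v)} [Groupoid.{max u v} G] (ι : C ⥤ G)
    (huniv : ∀ {H : Type (max u v)} [Groupoid.{max u v} H] (F : C ⥤ H),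
        ∃! Θ : G ⥤ H, ι ⋙ Θ = F) :
    ι.Faithful :=
  skeletal_rees_embeds_in_universal_groupoid_general h hRC ι huniv
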